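/- arXiv:2203.10906 — 4 statements merged into one kernel-verified Lean document; each statement's English description precedes it below -/
import Mathlib

section
/- Let k, σ ∈ ℝ, μ > 0 and Δt > 0 with μΔt < 1. Define k_Δt = −k·log(1−μΔt)/(μΔt), μ_Δt = −log(1−μΔt)/Δt, and s_Δt = −2σ²·log(1−μΔt)/(2μΔt − μ²Δt²). Then these quantities satisfy the matching system 1 − μΔt = exp(−Δt·μ_Δt), k/μ = k_Δt/μ_Δt, and σ²/(2μ − μ²Δt) = s_Δt/(2μ_Δt); moreover they are the unique solution: if m > 0, κ ∈ ℝ and s ∈ ℝ satisfy 1 − μΔt = exp(−Δt·m), k/μ = κ/m and σ²/(2μ − μ²Δt) = s/(2m), then m = μ_Δt, κ = k_Δt and s = s_Δt. -/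
/-- Backward-analysis parameter map for the explicit Euler discretization of the
Ornstein–Uhlenbeck process `dX = (k − μX)dt + σ dW` with time step `Δt`:
the perturbed parameters `(k_Δt, μ_Δt, σ_Δt²)` satisfy the matching system and are
its unique solution. -/
theorem euler_backward_analysis_matching_and_uniqueness
    (k σ μ Δt : ℝ) (hμ : 0 < μ) (hΔt : 0 < Δt) (h : μ * Δt < 1)
    (kd μd sd : ℝ)
    (hkd : kd = -(k * Real.log (1 - μ * Δt)) / (μ * Δt))
    (hμd : μd = -(Real.log (1 - μ * Δt)) / Δt)
    (hsd : sd = -(2 * σ ^ 2 * Real.log (1 - μ * Δt)) / (2 * μ * Δt - μ ^ 2 * Δt ^ 2)) :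
    (1 - μ * Δt = Real.exp (-(Δt * μd)) ∧
      k / μ = kd / μd ∧
      σ ^ 2 / (2 * μ - μ ^ 2 * Δt) = sd / (2 * μd)) ∧
    (∀ m κ s : ℝ, 0 < m →
      1 - μ * Δt = Real.exp (-(Δt * m)) →
      k / μ = κ / m →
      σ ^ 2 / (2 * μ - μ ^ 2 * Δt) = s / (2 * m) →
      m = μd ∧ κ = kd ∧ s = sd) := by
  have h1 : 0 < 1 - μ * Δt := by linarith
  have hμΔt : 0 < μ * Δt := mul_pos hμ hΔt
  set L := Real.log (1 - μ * Δt) with hLdef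
  have hL : L < 0 := Real.log_neg h1 (by linarith)
  have hexp : Real.exp L = 1 - μ * Δt := Real.exp_log h1
  have hΔt' : Δt ≠ 0 := ne_of_gt hΔt
  have hμ' : μ ≠ 0 := ne_of_gt hμ
  have hL' : L ≠ 0 := ne_of_lt hL
  have hden : 0 < 2 * μ - μ ^ 2 * Δt := by nlinarith
  have hden2 : 0 < 2 * μ * Δt - μ ^ 2 * Δt ^ 2 := by nlinarith
  have hμd0 : 0 < μd := by
    rw [hμd]; exact div_pos (by linarith) hΔt
  constructor
  · refine ⟨?_, ?_, ?_⟩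
    · rw [← hexp]
      congr 1
      rw [hμd]; field_simp
    · rw [hkd, hμd]
      rw [div_eq_div_iff hμ' (div_pos (by linarith : (0:ℝ) < -L) hΔt).ne']
      field_simp
    · rw [hsd, hμd]
      rw [div_eq_div_iff hden.ne'
        (by have := div_pos (by linarith : (0:ℝ) < -L) hΔt; linarith : (0:ℝ) < 2 * (-L / Δt)).ne']
      field_simp
      have h2 : (2 - Δt * μ) ≠ 0 := (by nlinarith : (0:ℝ) < 2 - Δt * μ).ne'
      rw [mul_div_cancel_right₀ _ h2]
  · intro m κ s hm heq hκ hs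
    have hmμd : m = μd := by
      have : Real.exp L = Real.exp (-(Δt * m)) := by rw [hexp]; exact heq
      have hLm : L = -(Δt * m) := Real.exp_injective this
      rw [hμd, hLm]; field_simp
    refine ⟨hmμd, ?_, ?_⟩
    · rw [div_eq_div_iff hμ' hm.ne'] at hκ
      have hκ' : κ = k * m / μ := by
        rw [eq_div_iff hμ']; linarith
      rw [hκ', hmμd, hμd, hkd]
      rw [div_eq_div_iff hμ' hμΔt.ne']
      field_simp
    · rw [div_eq_div_iff hden.ne' (by linarith : (0:ℝ) < 2 * m).ne'] at hs
      have hs' : s = σ ^ 2 * (2 * m) / (2 * μ - μ ^ 2 * Δt) := by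
        rw [eq_div_iff hden.ne']; linarith
      rw [hs', hmμd, hμd, hsd]
      rw [div_eq_div_iff hden.ne' hden2.ne']
      field_simp
end

section
/- Let k_Δt ∈ ℝ, μ_Δt > 0, s_Δt ≥ 0 and Δt > 0. Define μ = (1 − exp(−Δt·μ_Δt))/Δt, k = μ·k_Δt/μ_Δt, and s = s_Δt·(2 − Δt·μ)·μ/(2μ_Δt). Then 0 < μΔt < 1, and the forward backward-analysis map applied to (k, μ, s) recovers the original parameters: −k·log(1−μΔt)/(μΔt) = k_Δt, −log(1−μΔt)/Δt = μ_Δt, and −2s·log(1−μΔt)/(2μΔt − μ²Δt²) = s_Δt. -/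
/-- Explicit inverse of the backward-analysis parameter map: given perturbed
Ornstein–Uhlenbeck parameters `(k_Δt, μ_Δt, s_Δt)`, the Euler-scheme parameters
`(k, μ, s)` defined below satisfy `0 < μΔt < 1` and are mapped back to the given
parameters by the forward backward-analysis map. -/
theorem euler_backward_analysis_inverse
    (kd μd sd Δt : ℝ) (hμd : 0 < μd) (hsd : 0 ≤ sd) (hΔt : 0 < Δt)
    (μ k s : ℝ)
    (hμ : μ = (1 - Real.exp (-(Δt * μd))) / Δt)
    (hk : k = μ * kd / μd)
    (hs : s = sd * (2 - Δt * μ) * μ / (2 * μd)) :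
    (0 < μ * Δt ∧ μ * Δt < 1) ∧
    -(k * Real.log (1 - μ * Δt)) / (μ * Δt) = kd ∧
    -(Real.log (1 - μ * Δt)) / Δt = μd ∧
    -(2 * s * Real.log (1 - μ * Δt)) / (2 * μ * Δt - μ ^ 2 * Δt ^ 2) = sd := by
  have hE0 : 0 < Real.exp (-(Δt * μd)) := Real.exp_pos _
  have hE1 : Real.exp (-(Δt * μd)) < 1 := by
    rw [Real.exp_lt_one_iff]
    nlinarith
  have hμΔt : μ * Δt = 1 - Real.exp (-(Δt * μd)) := by
    rw [hμ]; field_simp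
  have hlog : Real.log (1 - μ * Δt) = -(Δt * μd) := by
    rw [hμΔt]
    simp [Real.log_exp]
  have hμ0 : 0 < μ := by
    rw [hμ]
    apply div_pos _ hΔt
    linarith
  refine ⟨⟨by positivity, by rw [hμΔt]; linarith⟩, ?_, ?_, ?_⟩
  · rw [hlog, hk]
    field_simp
  · rw [hlog]
    field_simp
  · rw [hlog, hs]
    have h2 : 2 - μ * Δt > 0 := by rw [hμΔt]; linarith
    have hden : 2 * μ * Δt - μ ^ 2 * Δt ^ 2 = (μ * Δt) * (2 - μ * Δt) := by ring
    rw [hden]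
    field_simp [show 2 - Δt * μ ≠ 0 by rw [mul_comm]; exact h2.ne']
end

section
/- Let k, σ ∈ ℝ, μ > 0, Δt > 0 with μΔt < 1, and define k_Δt = −k·log(1−μΔt)/(μΔt), μ_Δt = −log(1−μΔt)/Δt, σ_Δt² = −2σ²·log(1−μΔt)/(2μΔt − μ²Δt²). Then for every x₀ ∈ ℝ and all integers n, p ≥ 0, the Euler moment formulas coincide with the exact Ornstein–Uhlenbeck moment formulas with the perturbed parameters at times t_n = nΔt: (i) k/μ + (1 − μΔt)ⁿ(x₀ − k/μ) = (k_Δt/μ_Δt)(1 − exp(−μ_Δt·nΔt)) + exp(−μ_Δt·nΔt)·x₀, and (ii) σ²Δt/(1 − (1 − μΔt)²)·(1 − (1 − μΔt)^{2n})·(1 − μΔt)^p = (σ_Δt²/(2μ_Δt))·(exp(−μ_Δt·pΔt) − exp(−μ_Δt·(2n+p)Δt)). -/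
/-- The moment formulas of the explicit Euler discretization of the
Ornstein–Uhlenbeck process with parameters `(k, μ, σ)` coincide with the exact
Ornstein–Uhlenbeck moment formulas with the perturbed backward-analysis
parameters `(k_Δt, μ_Δt, σ_Δt²)` at the discrete times `t_n = nΔt`. -/
theorem euler_OU_moments_eq_exact_OU_moments
    (k σ μ Δt : ℝ) (hμ : 0 < μ) (hΔt : 0 < Δt) (h : μ * Δt < 1)
    (kd μd sd : ℝ)
    (hkd : kd = -(k * Real.log (1 - μ * Δt)) / (μ * Δt))
    (hμd : μd = -(Real.log (1 - μ * Δt)) / Δt)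
    (hsd : sd = -(2 * σ ^ 2 * Real.log (1 - μ * Δt)) / (2 * μ * Δt - μ ^ 2 * Δt ^ 2)) :
    ∀ (x₀ : ℝ) (n p : ℕ),
      (k / μ + (1 - μ * Δt) ^ n * (x₀ - k / μ) =
        kd / μd * (1 - Real.exp (-(μd * (n * Δt)))) + Real.exp (-(μd * (n * Δt))) * x₀) ∧
      (σ ^ 2 * Δt / (1 - (1 - μ * Δt) ^ 2) * (1 - (1 - μ * Δt) ^ (2 * n)) *
          (1 - μ * Δt) ^ p =
        sd / (2 * μd) *
          (Real.exp (-(μd * (p * Δt))) - Real.exp (-(μd * ((2 * n + p) * Δt))))) := by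
  intro x₀ n p
  have hpos : (0 : ℝ) < 1 - μ * Δt := by linarith
  have hlt1 : 1 - μ * Δt < 1 := by nlinarith
  set L := Real.log (1 - μ * Δt) with hLdef
  have hL : L < 0 := Real.log_neg hpos hlt1
  have hLne : L ≠ 0 := ne_of_lt hL
  have hΔne : Δt ≠ 0 := ne_of_gt hΔt
  have hμne : μ ≠ 0 := ne_of_gt hμ
  have hexp : ∀ m : ℕ, Real.exp (-(μd * (m * Δt))) = (1 - μ * Δt) ^ m := by
    intro m
    have : -(μd * (m * Δt)) = (m : ℝ) * L := by
      rw [hμd]; field_simp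
    rw [this, Real.exp_nat_mul, Real.exp_log hpos]
  have hkμ : kd / μd = k / μ := by
    rw [hkd, hμd]
    field_simp
  have hfac : 1 - (1 - μ * Δt) ^ 2 = 2 * μ * Δt - μ ^ 2 * Δt ^ 2 := by ring
  have hfpos : (0 : ℝ) < 2 * μ * Δt - μ ^ 2 * Δt ^ 2 := by nlinarith
  have hsμ : sd / (2 * μd) = σ ^ 2 * Δt / (2 * μ * Δt - μ ^ 2 * Δt ^ 2) := by
    rw [hsd, hμd]
    field_simp
  constructor
  · rw [hexp n, hkμ]; ring
  · rw [hexp p, show (-(μd * ((2 * n + p) * Δt))) = -(μd * (((2 * n + p : ℕ) : ℝ) * Δt)) by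
      push_cast; ring, hexp (2 * n + p), hsμ, hfac, pow_add]
    ring
end

section
/- Let k ≥ 1, let π be a finite Borel measure on ℝᵏ, let u₀ ∈ ℝᵏ with π(V) > 0 for every open neighborhood V of u₀, and let g_N : ℝᵏ → ℝ be Borel measurable functions converging uniformly on every compact set to a continuous function g satisfying g(u) < g(u₀) for all u ≠ u₀. Assume the separation condition: there exist δ > 0, a compact set K containing a neighborhood of u₀, and N₀ such that for all N ≥ N₀ and all u ∉ K, g_N(u₀) > g_N(u) + δ. Then for every bounded continuous f : ℝᵏ → ℝ, (∫ f·exp(N·g_N) dπ)/(∫ exp(N·g_N) dπ) → f(u₀) as N → ∞; i.e., the posterior measures with density proportional to exp(N·g_N) with respect to π converge weakly to the Dirac mass δ_{u₀}. -/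
open MeasureTheory Filter

/-- Deterministic Laplace-type posterior concentration: if the potentials `g_N`
converge uniformly on compacts to a continuous function `g` uniquely maximized at
`u₀`, the prior `π` charges every neighborhood of `u₀`, and the separation
condition off a compact set holds, then the posterior measures with density
proportional to `exp(N g_N)` with respect to `π` converge weakly to the Dirac mass
at `u₀`: posterior expectations of bounded continuous functions tend to `f(u₀)`. -/
theorem laplace_posterior_weak_convergence_to_dirac
    (k : ℕ) (hk : 1 ≤ k)
    (π : Measure (Fin k → ℝ)) [IsFiniteMeasure π]
    (u₀ : Fin k → ℝ)
    (hπpos : ∀ V : Set (Fin k → ℝ), IsOpen V → u₀ ∈ V → 0 < π V)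
    (g : ℕ → (Fin k → ℝ) → ℝ) (hgmeas : ∀ N, Measurable (g N))
    (glim : (Fin k → ℝ) → ℝ) (hglimcont : Continuous glim)
    (hunif : ∀ K : Set (Fin k → ℝ), IsCompact K →
      TendstoUniformlyOn g glim atTop K)
    (hmax : ∀ u : Fin k → ℝ, u ≠ u₀ → glim u < glim u₀)
    (hsep : ∃ δ > (0 : ℝ), ∃ K : Set (Fin k → ℝ), IsCompact K ∧ K ∈ nhds u₀ ∧
      ∃ N₀ : ℕ, ∀ N ≥ N₀, ∀ u ∉ K, g N u₀ > g N u + δ) :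
    ∀ f : BoundedContinuousFunction (Fin k → ℝ) ℝ,
      Tendsto (fun N : ℕ =>
          (∫ u, f u * Real.exp (N * g N u) ∂π) / (∫ u, Real.exp (N * g N u) ∂π))
        atTop (nhds (f u₀)) := by
  intro f
  rw [Metric.tendsto_atTop]
  intro ε hε
  obtain ⟨δ, hδ, K, hKc, hKn, N₀, hsepN⟩ := hsep
  have hu₀K : u₀ ∈ K := mem_of_mem_nhds hKn
  -- the neighborhood U of u₀ where f is close to f u₀
  set U : Set (Fin k → ℝ) := {u | |f u - f u₀| < ε / 2} ∩ interior K with hUdef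
  have hUopen : IsOpen U :=
    (isOpen_lt (continuous_abs.comp (f.continuous.sub continuous_const))
      continuous_const).inter isOpen_interior
  have hu₀U : u₀ ∈ U := by
    constructor
    · show |f u₀ - f u₀| < ε / 2
      simpa using half_pos hε
    · exact mem_interior_iff_mem_nhds.2 hKn
  -- gap η on K \ U
  obtain ⟨η, hη, hηS⟩ : ∃ η > (0:ℝ), ∀ u ∈ K \ U, glim u ≤ glim u₀ - η := by
    rcases (K \ U).eq_empty_or_nonempty with h | h
    · exact ⟨1, one_pos, by simp [h]⟩
    · obtain ⟨z, hzS, hz⟩ := (hKc.diff hUopen).exists_isMaxOn h hglimcont.continuousOn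
      refine ⟨glim u₀ - glim z, ?_, fun u hu => ?_⟩
      · have hzne : z ≠ u₀ := fun e => hzS.2 (e ▸ hu₀U)
        linarith [hmax z hzne]
      · have := hz hu
        simp only [Set.mem_setOf_eq] at this
        linarith
  set ε₀ : ℝ := min η δ / 6 with hε₀def
  have hε₀ : 0 < ε₀ := by
    have := lt_min hη hδ
    positivity
  have hηε₀ : 6 * ε₀ ≤ η := by
    have : min η δ ≤ η := min_le_left _ _
    rw [hε₀def]; linarith
  have hδε₀ : 6 * ε₀ ≤ δ := by
    have : min η δ ≤ δ := min_le_right _ _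
    rw [hε₀def]; linarith
  -- small ball B near u₀
  set B : Set (Fin k → ℝ) := {u | glim u₀ - ε₀ < glim u} ∩ interior K with hBdef
  have hBopen : IsOpen B :=
    (isOpen_lt continuous_const hglimcont).inter isOpen_interior
  have hu₀B : u₀ ∈ B := by
    constructor
    · show glim u₀ - ε₀ < glim u₀; linarith
    · exact mem_interior_iff_mem_nhds.2 hKn
  have hπB : 0 < (π B).toReal :=
    ENNReal.toReal_pos (hπpos B hBopen hu₀B).ne' (measure_ne_top π B)
  -- maximum of glim on K
  obtain ⟨z₀, _, hz₀⟩ := hKc.exists_isMaxOn ⟨u₀, hu₀K⟩ hglimcont.continuousOn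
  set m : ℝ := glim z₀ with hmdef
  -- uniform convergence on K at level ε₀
  obtain ⟨N₁, hN₁⟩ := eventually_atTop.1
    ((Metric.tendstoUniformlyOn_iff.1 (hunif K hKc)) ε₀ hε₀)
  -- constant for the tail estimate
  set C : ℝ := (π Set.univ).toReal / (π B).toReal with hCdef
  have hC0 : 0 ≤ C := by positivity
  have hexp0 : Tendsto (fun N : ℕ => C * Real.exp (-ε₀) ^ N) atTop (nhds 0) := by
    have := (tendsto_pow_atTop_nhds_zero_of_lt_one (Real.exp_pos (-ε₀)).le
      (Real.exp_lt_one_iff.2 (by linarith))).const_mul C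
    simpa using this
  have htarget : 0 < ε / (4 * ‖f‖ + 1) := by positivity
  obtain ⟨N₂, hN₂⟩ := eventually_atTop.1 (hexp0.eventually_lt_const htarget)
  refine ⟨max N₀ (max N₁ N₂), fun N hN => ?_⟩
  have hN0 : N ≥ N₀ := le_trans (le_max_left _ _) hN
  have hN1 : ∀ u ∈ K, dist (glim u) (g N u) < ε₀ :=
    hN₁ N (le_trans (le_trans (le_max_left _ _) (le_max_right _ _)) hN)
  have hN2 : C * Real.exp (-ε₀) ^ N < ε / (4 * ‖f‖ + 1) :=
    hN₂ N (le_trans (le_trans (le_max_right _ _) (le_max_right _ _)) hN)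
  -- pointwise bounds
  set a : ℝ := g N u₀ with hadef
  have hKdist : ∀ u ∈ K, |glim u - g N u| < ε₀ := by
    intro u hu; rw [← Real.dist_eq]; exact hN1 u hu
  have ha_near : |glim u₀ - a| < ε₀ := hKdist u₀ hu₀K
  have hBlow : ∀ u ∈ B, a - 3 * ε₀ ≤ g N u := by
    intro u hu
    have huK : u ∈ K := interior_subset hu.2
    have h1 := hKdist u huK
    have h2 : glim u₀ - ε₀ < glim u := hu.1
    rw [abs_lt] at h1 ha_near
    linarith [h1.1, h1.2, ha_near.1, ha_near.2]
  have hUclow : ∀ u ∈ Uᶜ, g N u ≤ a - 4 * ε₀ := by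
    intro u hu
    by_cases huK : u ∈ K
    · have h1 := hKdist u huK
      have h2 := hηS u ⟨huK, hu⟩
      rw [abs_lt] at h1 ha_near
      linarith [h1.1, h1.2, ha_near.1, ha_near.2]
    · have := hsepN N hN0 u huK
      linarith
  have hglob : ∀ u, g N u ≤ max (m + ε₀) a := by
    intro u
    by_cases huK : u ∈ K
    · have h1 := hKdist u huK
      have h2 : glim u ≤ m := hz₀ huK
      rw [abs_lt] at h1
      exact le_max_of_le_left (by linarith [h1.1, h1.2])
    · have := hsepN N hN0 u huK
      exact le_max_of_le_right (by linarith)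
  set M₁ : ℝ := max (m + ε₀) a with hM₁def
  set E : (Fin k → ℝ) → ℝ := fun u => Real.exp (N * g N u) with hEdef
  have hEmeas : Measurable E := (measurable_const.mul (hgmeas N)).exp
  have hEpos : ∀ u, 0 < E u := fun u => Real.exp_pos _
  have hEbd : ∀ u, E u ≤ Real.exp (N * M₁) := by
    intro u
    exact Real.exp_le_exp.2 (mul_le_mul_of_nonneg_left (hglob u) (Nat.cast_nonneg N))
  have hEint : Integrable E π := by
    refine Integrable.mono' (integrable_const (Real.exp (N * M₁)))
      hEmeas.aestronglyMeasurable (ae_of_all _ fun u => ?_)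
    rw [Real.norm_eq_abs, abs_of_pos (hEpos u)]
    exact hEbd u
  have hFint : Integrable (fun u => f u * E u) π := by
    refine Integrable.mono' (integrable_const (‖f‖ * Real.exp (N * M₁)))
      (f.continuous.measurable.mul hEmeas).aestronglyMeasurable
      (ae_of_all _ fun u => ?_)
    rw [norm_mul, Real.norm_eq_abs (E u), abs_of_pos (hEpos u)]
    exact mul_le_mul (f.norm_coe_le_norm u) (hEbd u) (hEpos u).le (norm_nonneg f)
  have hGint : Integrable (fun u => |f u - f u₀| * E u) π := by
    refine Integrable.mono' (integrable_const (2 * ‖f‖ * Real.exp (N * M₁)))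
      (((continuous_abs.comp (f.continuous.sub continuous_const)).measurable).mul
        hEmeas).aestronglyMeasurable (ae_of_all _ fun u => ?_)
    rw [Real.norm_eq_abs, abs_mul, abs_abs, abs_of_pos (hEpos u)]
    have h1 : |f u - f u₀| ≤ 2 * ‖f‖ := by
      calc |f u - f u₀| ≤ |f u| + |f u₀| := abs_sub _ _
        _ ≤ ‖f‖ + ‖f‖ := add_le_add (f.norm_coe_le_norm u) (f.norm_coe_le_norm u₀)
        _ = 2 * ‖f‖ := by ring
    exact mul_le_mul h1 (hEbd u) (hEpos u).le (by positivity)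
  set D : ℝ := ∫ u, E u ∂π with hDdef
  set I : ℝ := ∫ u, f u * E u ∂π with hIdef
  have hUmeas : MeasurableSet U := hUopen.measurableSet
  have hBmeas : MeasurableSet B := hBopen.measurableSet
  -- lower bound for D
  have hDlow : Real.exp ((N : ℝ) * (a - 3 * ε₀)) * (π B).toReal ≤ D := by
    calc Real.exp ((N : ℝ) * (a - 3 * ε₀)) * (π B).toReal
        ≤ ∫ u in B, E u ∂π := by
          refine setIntegral_ge_of_const_le_real hBmeas (measure_ne_top π B)
            (fun u hu => ?_) hEint.integrableOn
          exact Real.exp_le_exp.2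
            (mul_le_mul_of_nonneg_left (hBlow u hu) (Nat.cast_nonneg N))
      _ ≤ D := setIntegral_le_integral hEint (ae_of_all _ fun u => (hEpos u).le)
  have hDpos : 0 < D :=
    lt_of_lt_of_le (by positivity) hDlow
  -- tail bound
  have hTail : ∫ u in Uᶜ, E u ∂π ≤
      Real.exp ((N : ℝ) * (a - 4 * ε₀)) * (π Set.univ).toReal := by
    have h1 : ‖∫ u in Uᶜ, E u ∂π‖ ≤
        Real.exp ((N : ℝ) * (a - 4 * ε₀)) * (π Uᶜ).toReal := by
      refine norm_setIntegral_le_of_norm_le_const (measure_lt_top π _)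
        (fun u hu => ?_)
      rw [Real.norm_eq_abs, abs_of_pos (hEpos u)]
      exact Real.exp_le_exp.2
        (mul_le_mul_of_nonneg_left (hUclow u hu) (Nat.cast_nonneg N))
    calc ∫ u in Uᶜ, E u ∂π ≤ ‖∫ u in Uᶜ, E u ∂π‖ := le_abs_self _
      _ ≤ Real.exp ((N : ℝ) * (a - 4 * ε₀)) * (π Uᶜ).toReal := h1
      _ ≤ Real.exp ((N : ℝ) * (a - 4 * ε₀)) * (π Set.univ).toReal := by
          refine mul_le_mul_of_nonneg_left ?_ (Real.exp_pos _).le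
          exact ENNReal.toReal_mono (measure_ne_top π _)
            (measure_mono (Set.subset_univ _))
  -- error representation
  have hrep : I / D - f u₀ = (∫ u, (f u - f u₀) * E u ∂π) / D := by
    have : ∫ u, (f u - f u₀) * E u ∂π = I - f u₀ * D := by
      simp only [sub_mul]
      rw [integral_sub hFint (hEint.const_mul (f u₀)), integral_const_mul]
    rw [this, sub_div, mul_div_assoc, div_self hDpos.ne', mul_one]
  -- bound the numerator
  have hnum : |∫ u, (f u - f u₀) * E u ∂π| ≤
      (ε / 2) * D + 2 * ‖f‖ * Real.exp ((N : ℝ) * (a - 4 * ε₀)) * (π Set.univ).toReal := by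
    have habs : |∫ u, (f u - f u₀) * E u ∂π| ≤ ∫ u, |f u - f u₀| * E u ∂π := by
      calc |∫ u, (f u - f u₀) * E u ∂π| ≤ ∫ u, |f u - f u₀| * |E u| ∂π := by
            simpa [Real.norm_eq_abs, abs_mul] using
              norm_integral_le_integral_norm (fun u => (f u - f u₀) * E u) (μ := π)
        _ = ∫ u, |f u - f u₀| * E u ∂π := by
            congr 1; funext u; rw [abs_of_pos (hEpos u)]
    refine le_trans habs ?_
    have hsplit : ∫ u, |f u - f u₀| * E u ∂π =
        (∫ u in U, |f u - f u₀| * E u ∂π) + ∫ u in Uᶜ, |f u - f u₀| * E u ∂π :=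
      (integral_add_compl hUmeas hGint).symm
    have hU' : ∫ u in U, |f u - f u₀| * E u ∂π ≤ (ε / 2) * D := by
      calc ∫ u in U, |f u - f u₀| * E u ∂π
          ≤ ∫ u in U, (ε / 2) * E u ∂π := by
            refine setIntegral_mono_on hGint.integrableOn
              (hEint.const_mul (ε / 2)).integrableOn hUmeas (fun u hu => ?_)
            exact mul_le_mul_of_nonneg_right (le_of_lt hu.1) (hEpos u).le
        _ = (ε / 2) * ∫ u in U, E u ∂π := integral_const_mul _ _
        _ ≤ (ε / 2) * D := by
            refine mul_le_mul_of_nonneg_left ?_ (half_pos hε).le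
            exact setIntegral_le_integral hEint (ae_of_all _ fun u => (hEpos u).le)
    have hUc' : ∫ u in Uᶜ, |f u - f u₀| * E u ∂π ≤
        2 * ‖f‖ * Real.exp ((N : ℝ) * (a - 4 * ε₀)) * (π Set.univ).toReal := by
      calc ∫ u in Uᶜ, |f u - f u₀| * E u ∂π
          ≤ ∫ u in Uᶜ, (2 * ‖f‖) * E u ∂π := by
            refine setIntegral_mono_on hGint.integrableOn
              (hEint.const_mul (2 * ‖f‖)).integrableOn hUopen.isClosed_compl.measurableSet
              (fun u _ => ?_)
            refine mul_le_mul_of_nonneg_right ?_ (hEpos u).le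
            calc |f u - f u₀| ≤ |f u| + |f u₀| := abs_sub _ _
              _ ≤ ‖f‖ + ‖f‖ := add_le_add (f.norm_coe_le_norm u) (f.norm_coe_le_norm u₀)
              _ = 2 * ‖f‖ := by ring
        _ = (2 * ‖f‖) * ∫ u in Uᶜ, E u ∂π := integral_const_mul _ _
        _ ≤ 2 * ‖f‖ * Real.exp ((N : ℝ) * (a - 4 * ε₀)) * (π Set.univ).toReal := by
            have h := mul_le_mul_of_nonneg_left hTail
              (by positivity : (0:ℝ) ≤ 2 * ‖f‖)
            linarith [h]
    rw [hsplit]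
    exact add_le_add hU' hUc'
  -- compare tail with D
  have hkey : Real.exp ((N : ℝ) * (a - 4 * ε₀)) * (π Set.univ).toReal ≤
      C * Real.exp (-ε₀) ^ N * D := by
    have h1 : Real.exp ((N : ℝ) * (a - 4 * ε₀)) =
        Real.exp (-ε₀) ^ N * Real.exp ((N : ℝ) * (a - 3 * ε₀)) := by
      rw [← Real.exp_nat_mul, ← Real.exp_add]
      ring_nf
    have h2 : C * Real.exp (-ε₀) ^ N * D ≥
        C * Real.exp (-ε₀) ^ N * (Real.exp ((N : ℝ) * (a - 3 * ε₀)) * (π B).toReal) := by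
      refine mul_le_mul_of_nonneg_left hDlow ?_
      positivity
    have h3 : C * Real.exp (-ε₀) ^ N * (Real.exp ((N : ℝ) * (a - 3 * ε₀)) * (π B).toReal)
        = Real.exp ((N : ℝ) * (a - 4 * ε₀)) * (π Set.univ).toReal := by
      rw [h1, hCdef]
      field_simp
    linarith [h2, h3.ge, h3.le]
  -- conclude
  rw [Real.dist_eq, hrep]
  have hfrac : |(∫ u, (f u - f u₀) * E u ∂π) / D| ≤
      ε / 2 + 2 * ‖f‖ * (C * Real.exp (-ε₀) ^ N) := by
    rw [abs_div, abs_of_pos hDpos, div_le_iff₀ hDpos]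
    calc |∫ u, (f u - f u₀) * E u ∂π|
        ≤ (ε / 2) * D + 2 * ‖f‖ * Real.exp ((N : ℝ) * (a - 4 * ε₀)) * (π Set.univ).toReal :=
          hnum
      _ ≤ (ε / 2) * D + 2 * ‖f‖ * (C * Real.exp (-ε₀) ^ N * D) := by
          have := mul_le_mul_of_nonneg_left hkey (by positivity : (0:ℝ) ≤ 2 * ‖f‖)
          linarith [this]
      _ = (ε / 2 + 2 * ‖f‖ * (C * Real.exp (-ε₀) ^ N)) * D := by ring
  refine lt_of_le_of_lt hfrac ?_
  have hfnn : (0:ℝ) ≤ ‖f‖ := norm_nonneg f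
  have hCe : 0 ≤ C * Real.exp (-ε₀) ^ N := by positivity
  have h4 : 2 * ‖f‖ * (C * Real.exp (-ε₀) ^ N) < ε / 2 := by
    rcases eq_or_lt_of_le hfnn with h | h
    · rw [← h]; simpa using half_pos hε
    · have := mul_lt_mul_of_pos_left hN2 (by linarith : (0:ℝ) < 2 * ‖f‖)
      have h5 : 2 * ‖f‖ * (ε / (4 * ‖f‖ + 1)) ≤ ε / 2 := by
        have ht : ε / (4 * ‖f‖ + 1) * (4 * ‖f‖ + 1) = ε :=
          div_mul_cancel₀ _ (by positivity)
        nlinarith [ht, htarget.le]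
      linarith
  linarith
end
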